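/- Let N, M, ℓ ≥ 1, set s = 2ℓ − 1, n = s·N and m = s·M, and let f, f̃ : ℝ × ℝ → ℝ satisfy f̃(x_i^n, x_j^m) = f(x_i^n, x_j^m) for all 1 ≤ i ≤ n and 1 ≤ j ≤ m (i.e., the input image is uncorrupted: I^in = I). Then the output image exactly equals the target resized image, I^out_{k,h} = L_{n,m}f̃(x_k^N, x_h^M) = f(x_k^N, x_h^M) = I^res_{k,h} for all 1 ≤ k ≤ N and 1 ≤ h ≤ M, and consequently MSE(I^res, I^out) = 0. -/

import Mathlib

/-! Every coarse node is a fine node: since `2 ((2ℓ-1)(k-1) + ℓ) - 1 = (2ℓ-1)(2k-1)`, the node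
`x_k^N` equals `x_{(2ℓ-1)(k-1)+ℓ}^{(2ℓ-1)N}`. The interpolant reproduces the data at the fine
nodes, where the data are uncorrupted, so the output agrees with `f` at every coarse node. -/

open Real Finset

/-- First-kind Chebyshev node of order `μ` at index `k`: `cos((2k-1)π/(2μ))`. -/
noncomputable def chebNode (μ k : ℕ) : ℝ :=
  Real.cos ((2 * (k : ℝ) - 1) * Real.pi / (2 * (μ : ℝ)))

/-- `k`-th fundamental Lagrange polynomial on the first-kind Chebyshev nodes of order `μ`. -/
noncomputable def lagrangeFund (μ k : ℕ) (ξ : ℝ) : ℝ :=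
  ∏ s ∈ (Finset.Icc 1 μ).erase k, (ξ - chebNode μ s) / (chebNode μ k - chebNode μ s)

/-- Bivariate tensor-product Lagrange–Chebyshev interpolation polynomial `L_{n,m} g`. -/
noncomputable def lagrangeCheb (n m : ℕ) (g : ℝ × ℝ → ℝ) (x y : ℝ) : ℝ :=
  ∑ i ∈ Finset.Icc 1 n, ∑ j ∈ Finset.Icc 1 m,
    g (chebNode n i, chebNode m j) * lagrangeFund n i x * lagrangeFund m j y

lemma chebNode_injOn (μ : ℕ) : Set.InjOn (chebNode μ) (Icc 1 μ : Set ℕ) := by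
  intro a ha b hb hab
  simp only [coe_Icc, Set.mem_Icc] at ha hb
  have hμ : (0 : ℝ) < μ := by exact_mod_cast ha.1.trans ha.2
  have angle_mem : ∀ c : ℕ, 1 ≤ c → c ≤ μ →
      (2 * (c : ℝ) - 1) * π / (2 * μ) ∈ Set.Icc 0 π := by
    intro c hc1 hcμ
    have hc1' : (1 : ℝ) ≤ c := by exact_mod_cast hc1
    have hcμ' : (c : ℝ) ≤ μ := by exact_mod_cast hcμ
    constructor
    · exact div_nonneg (mul_nonneg (by linarith) pi_pos.le) (by linarith)
    · rw [div_le_iff₀ (by linarith)]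
      nlinarith [pi_pos]
  have hangle := injOn_cos (angle_mem a ha.1 ha.2) (angle_mem b hb.1 hb.2) hab
  field_simp at hangle
  exact_mod_cast (by linarith : (a : ℝ) = b)

lemma lagrangeFund_chebNode_self {μ k : ℕ} (hk : k ∈ Icc 1 μ) :
    lagrangeFund μ k (chebNode μ k) = 1 := by
  refine prod_eq_one fun s hs => div_self (sub_ne_zero.mpr fun hks => ?_)
  exact ne_of_mem_erase hs (chebNode_injOn μ (mem_of_mem_erase hs) hk hks.symm)

lemma lagrangeFund_chebNode_of_ne {μ i k : ℕ} (hk : k ∈ Icc 1 μ) (hik : i ≠ k) :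
    lagrangeFund μ i (chebNode μ k) = 0 :=
  prod_eq_zero (mem_erase.mpr ⟨hik.symm, hk⟩) (by rw [sub_self, zero_div])

lemma lagrangeCheb_chebNode (n m : ℕ) (g : ℝ × ℝ → ℝ) {k h : ℕ}
    (hk : k ∈ Icc 1 n) (hh : h ∈ Icc 1 m) :
    lagrangeCheb n m g (chebNode n k) (chebNode m h) = g (chebNode n k, chebNode m h) := by
  unfold lagrangeCheb
  rw [sum_eq_single_of_mem k hk, sum_eq_single_of_mem h hh,
    lagrangeFund_chebNode_self hk, lagrangeFund_chebNode_self hh, mul_one, mul_one]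
  · intro j _ hj
    rw [lagrangeFund_chebNode_of_ne hh hj, mul_zero]
  · intro i _ hi
    exact sum_eq_zero fun j _ => by rw [lagrangeFund_chebNode_of_ne hk hi, mul_zero, zero_mul]

lemma chebNode_odd_mul {ℓ k : ℕ} (hℓ : 1 ≤ ℓ) (hk : 1 ≤ k) (μ : ℕ) :
    chebNode ((2 * ℓ - 1) * μ) ((2 * ℓ - 1) * (k - 1) + ℓ) = chebNode μ k := by
  unfold chebNode
  have hs : ((2 * ℓ - 1 : ℕ) : ℝ) = 2 * ℓ - 1 := by
    rw [Nat.cast_sub (by omega)]; push_cast; ring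
  have hs_pos : (0 : ℝ) < 2 * ℓ - 1 := by
    have : (1 : ℝ) ≤ ℓ := by exact_mod_cast hℓ
    linarith
  rw [Nat.cast_add, Nat.cast_mul, Nat.cast_mul, hs, Nat.cast_sub hk, Nat.cast_one]
  congr 1
  rw [show (2 * ((2 * (ℓ : ℝ) - 1) * (k - 1) + ℓ) - 1) * π / (2 * ((2 * ℓ - 1) * μ)) =
      (2 * ℓ - 1) * ((2 * k - 1) * π) / ((2 * ℓ - 1) * (2 * μ)) by ring,
    mul_div_mul_left _ _ hs_pos.ne']

lemma odd_mul_index_mem_Icc {ℓ k μ : ℕ} (hℓ : 1 ≤ ℓ) (hk : k ∈ Icc 1 μ) :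
    (2 * ℓ - 1) * (k - 1) + ℓ ∈ Icc 1 ((2 * ℓ - 1) * μ) := by
  rw [mem_Icc] at hk ⊢
  refine ⟨by omega, ?_⟩
  calc (2 * ℓ - 1) * (k - 1) + ℓ ≤ (2 * ℓ - 1) * (k - 1) + (2 * ℓ - 1) := by omega
    _ = (2 * ℓ - 1) * k := by rw [← Nat.mul_succ]; congr 1; omega
    _ ≤ (2 * ℓ - 1) * μ := Nat.mul_le_mul_left _ hk.2

theorem mse_zero_of_uncorrupted_general (N M ℓ : ℕ) (hℓ : 1 ≤ ℓ)
    (f ft : ℝ × ℝ → ℝ)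
    (hin : ∀ i ∈ Finset.Icc 1 ((2 * ℓ - 1) * N), ∀ j ∈ Finset.Icc 1 ((2 * ℓ - 1) * M),
      ft (chebNode ((2 * ℓ - 1) * N) i, chebNode ((2 * ℓ - 1) * M) j) =
        f (chebNode ((2 * ℓ - 1) * N) i, chebNode ((2 * ℓ - 1) * M) j)) :
    (∀ k ∈ Finset.Icc 1 N, ∀ h ∈ Finset.Icc 1 M,
      lagrangeCheb ((2 * ℓ - 1) * N) ((2 * ℓ - 1) * M) ft (chebNode N k) (chebNode M h) =
        f (chebNode N k, chebNode M h)) ∧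
    (1 / ((N : ℝ) * (M : ℝ))) *
        ∑ k ∈ Finset.Icc 1 N, ∑ h ∈ Finset.Icc 1 M,
          (f (chebNode N k, chebNode M h) -
            lagrangeCheb ((2 * ℓ - 1) * N) ((2 * ℓ - 1) * M) ft
              (chebNode N k) (chebNode M h)) ^ 2 = 0 := by
  have hout : ∀ k ∈ Icc 1 N, ∀ h ∈ Icc 1 M,
      lagrangeCheb ((2 * ℓ - 1) * N) ((2 * ℓ - 1) * M) ft (chebNode N k) (chebNode M h) =
        f (chebNode N k, chebNode M h) := by
    intro k hk h hh
    have hk' := odd_mul_index_mem_Icc hℓ hk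
    have hh' := odd_mul_index_mem_Icc hℓ hh
    rw [← chebNode_odd_mul hℓ (mem_Icc.mp hk).1, ← chebNode_odd_mul hℓ (mem_Icc.mp hh).1,
      lagrangeCheb_chebNode _ _ _ hk' hh', hin _ hk' _ hh']
  refine ⟨hout, ?_⟩
  rw [sum_eq_zero fun k hk => sum_eq_zero fun h hh => by
    rw [hout k hk h hh, sub_self, zero_pow two_ne_zero], mul_zero]

/-- if the input image is uncorrupted (`I^in = I`), then for odd scale factor
`s = 2ℓ - 1` the d-LCI output equals the target resized image and the MSE is zero. -/
theorem mse_zero_of_uncorrupted (N M ℓ : ℕ) (hN : 1 ≤ N) (hM : 1 ≤ M) (hℓ : 1 ≤ ℓ)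
    (f ft : ℝ × ℝ → ℝ)
    (hin : ∀ i ∈ Finset.Icc 1 ((2 * ℓ - 1) * N), ∀ j ∈ Finset.Icc 1 ((2 * ℓ - 1) * M),
      ft (chebNode ((2 * ℓ - 1) * N) i, chebNode ((2 * ℓ - 1) * M) j) =
        f (chebNode ((2 * ℓ - 1) * N) i, chebNode ((2 * ℓ - 1) * M) j)) :
    (∀ k ∈ Finset.Icc 1 N, ∀ h ∈ Finset.Icc 1 M,
      lagrangeCheb ((2 * ℓ - 1) * N) ((2 * ℓ - 1) * M) ft (chebNode N k) (chebNode M h) =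
        f (chebNode N k, chebNode M h)) ∧
    (1 / ((N : ℝ) * (M : ℝ))) *
        ∑ k ∈ Finset.Icc 1 N, ∑ h ∈ Finset.Icc 1 M,
          (f (chebNode N k, chebNode M h) -
            lagrangeCheb ((2 * ℓ - 1) * N) ((2 * ℓ - 1) * M) ft
              (chebNode N k) (chebNode M h)) ^ 2 = 0 :=
  mse_zero_of_uncorrupted_general N M ℓ hℓ f ft hin
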